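/- Let d ≥ 1, γ ∈ ℝ, ν > 0, let a : ℝ → ℝ be continuous, and let p : ℝ → 𝓢(ℝ^d, ℝ) be a continuously differentiable map into the Schwartz space such that for all t and all x ∈ ℝ^d: ∂p/∂t (x,t) = ∑_{i=1}^d [ −∂/∂x_i ( (a(t) − x_i + (γ/d)∑_{j=1}^d (x_j − x_i)) p(x,t) ) + ν ∂²p/∂x_i² (x,t) ], and suppose ∫_{ℝ^d} p(x,t) dx = 1 for all t. Define X̄_i(t) = ∫_{ℝ^d} x_i p(x,t) dx and Σ_{ij}(t) = ∫_{ℝ^d} x_i x_j p(x,t) dx. Then each Σ_{ij} is differentiable and satisfies d Σ_{ij}/dt = a(t)( X̄_j + X̄_i ) − 2(1+γ) Σ_{ij} + (γ/d) ∑_{l=1}^d ( Σ_{lj} + Σ_{li} ) + 2ν δ_{ij} for all i, j ∈ {1, …, d}, where δ_{ij} is the Kronecker delta. -/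

import Mathlib

open Real MeasureTheory Filter Topology SchwartzMap


section HarmonicTrapAux

variable {d : ℕ}

lemma htse_coord_coe (i : Fin d) :
    ⇑(EuclideanSpace.proj (𝕜 := ℝ) i) = fun y : EuclideanSpace ℝ (Fin d) => y i := rfl

lemma htse_coord_temperate (i : Fin d) :
    Function.HasTemperateGrowth (fun x : EuclideanSpace ℝ (Fin d) => x i) :=
  (EuclideanSpace.proj i).hasTemperateGrowth

/-- Multiplication by the `i`-th coordinate as a continuous linear map on Schwartz space. -/
noncomputable def htseMulCoord (i : Fin d) :
    𝓢(EuclideanSpace ℝ (Fin d), ℝ) →L[ℝ] 𝓢(EuclideanSpace ℝ (Fin d), ℝ) :=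
  bilinLeftCLM (ContinuousLinearMap.mul ℝ ℝ) (htse_coord_temperate i)

@[simp] lemma htseMulCoord_apply (i : Fin d) (f : 𝓢(EuclideanSpace ℝ (Fin d), ℝ))
    (x : EuclideanSpace ℝ (Fin d)) : htseMulCoord i f x = f x * x i := rfl

lemma htse_hasFDerivAt_coord (i : Fin d) (x : EuclideanSpace ℝ (Fin d)) :
    HasFDerivAt (fun y : EuclideanSpace ℝ (Fin d) => y i)
      (EuclideanSpace.proj (𝕜 := ℝ) i) x := by
  have := (EuclideanSpace.proj (𝕜 := ℝ) (ι := Fin d) i).hasFDerivAt (x := x)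
  rwa [htse_coord_coe] at this

lemma htse_fderiv_coord (i : Fin d) (x v : EuclideanSpace ℝ (Fin d)) :
    fderiv ℝ (fun y : EuclideanSpace ℝ (Fin d) => y i) x v = v i := by
  rw [(htse_hasFDerivAt_coord i x).fderiv]; rfl

lemma htse_fderiv_coord2 (i j : Fin d) (x v : EuclideanSpace ℝ (Fin d)) :
    fderiv ℝ (fun y : EuclideanSpace ℝ (Fin d) => y i * y j) x v = x i * v j + x j * v i := by
  have h : HasFDerivAt (fun y : EuclideanSpace ℝ (Fin d) => y i * y j)
      ((x i) • (EuclideanSpace.proj (𝕜 := ℝ) j) + (x j) • (EuclideanSpace.proj (𝕜 := ℝ) i)) x :=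
    (htse_hasFDerivAt_coord i x).mul (htse_hasFDerivAt_coord j x)
  rw [h.fderiv]
  simp only [ContinuousLinearMap.add_apply, ContinuousLinearMap.coe_smul', Pi.smul_apply,
    smul_eq_mul]
  rfl

/-- Directional derivative as a continuous linear map on Schwartz space. -/
noncomputable def pderivCLM (_𝕜 : Type) (m : EuclideanSpace ℝ (Fin d)) :
    𝓢(EuclideanSpace ℝ (Fin d), ℝ) →L[ℝ] 𝓢(EuclideanSpace ℝ (Fin d), ℝ) :=
  LineDeriv.lineDerivOpCLM ℝ 𝓢(EuclideanSpace ℝ (Fin d), ℝ) m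

lemma pderivCLM_apply (_𝕜 : Type) (m : EuclideanSpace ℝ (Fin d))
    (f : 𝓢(EuclideanSpace ℝ (Fin d), ℝ)) (x : EuclideanSpace ℝ (Fin d)) :
    pderivCLM _𝕜 m f x = fderiv ℝ f x m :=
  SchwartzMap.lineDerivOp_apply_eq_fderiv m f x

lemma htse_integrable_coord_mul (i : Fin d) (f : 𝓢(EuclideanSpace ℝ (Fin d), ℝ)) :
    Integrable (fun x : EuclideanSpace ℝ (Fin d) => x i * f x) :=
  ((htseMulCoord i f).integrable).congr (Filter.Eventually.of_forall fun x => by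
    simp [mul_comm])

lemma htse_integrable_coord2_mul (i j : Fin d) (f : 𝓢(EuclideanSpace ℝ (Fin d), ℝ)) :
    Integrable (fun x : EuclideanSpace ℝ (Fin d) => x i * x j * f x) :=
  ((htseMulCoord j (htseMulCoord i f)).integrable).congr (Filter.Eventually.of_forall fun x => by
    simp; ring)

/-- Integration by parts: `∫ xᵢ ∂ᵥ f = -vᵢ ∫ f` for Schwartz `f`. -/
lemma htse_ibp1 (i : Fin d) (v : EuclideanSpace ℝ (Fin d))
    (f : 𝓢(EuclideanSpace ℝ (Fin d), ℝ)) :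
    ∫ x : EuclideanSpace ℝ (Fin d), x i * fderiv ℝ f x v
      = -(v i * ∫ x : EuclideanSpace ℝ (Fin d), f x) := by
  have hdiff : Differentiable ℝ (fun y : EuclideanSpace ℝ (Fin d) => y i) :=
    fun x => ((htse_hasFDerivAt_coord i x)).differentiableAt
  have key := integral_mul_fderiv_eq_neg_fderiv_mul_of_integrable
    (μ := (volume : Measure (EuclideanSpace ℝ (Fin d))))
    (f := fun y : EuclideanSpace ℝ (Fin d) => y i) (g := ⇑f) (v := v)
    ?_ ?_ ?_ (fun x _ => hdiff x) (fun x _ => f.differentiable x)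
  · rw [key]
    simp_rw [htse_fderiv_coord]
    rw [integral_const_mul]
  · simp_rw [htse_fderiv_coord]
    exact f.integrable.const_mul _
  · have := htse_integrable_coord_mul i (pderivCLM ℝ v f)
    simpa [pderivCLM_apply] using this
  · exact htse_integrable_coord_mul i f

/-- Integration by parts: `∫ xᵢ xⱼ ∂ᵥ f = -vⱼ ∫ xᵢ f - vᵢ ∫ xⱼ f` for Schwartz `f`. -/
lemma htse_ibp2 (i j : Fin d) (v : EuclideanSpace ℝ (Fin d))
    (f : 𝓢(EuclideanSpace ℝ (Fin d), ℝ)) :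
    ∫ x : EuclideanSpace ℝ (Fin d), x i * x j * fderiv ℝ f x v
      = -(v j * ∫ x : EuclideanSpace ℝ (Fin d), x i * f x)
        - (v i * ∫ x : EuclideanSpace ℝ (Fin d), x j * f x) := by
  have hdiff2 : Differentiable ℝ (fun y : EuclideanSpace ℝ (Fin d) => y i * y j) :=
    fun x => ((htse_hasFDerivAt_coord i x).mul (htse_hasFDerivAt_coord j x)).differentiableAt
  have key := integral_mul_fderiv_eq_neg_fderiv_mul_of_integrable
    (μ := (volume : Measure (EuclideanSpace ℝ (Fin d))))
    (f := fun y : EuclideanSpace ℝ (Fin d) => y i * y j) (g := ⇑f) (v := v)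
    ?_ ?_ ?_ (fun x _ => hdiff2 x) (fun x _ => f.differentiable x)
  · rw [key]
    simp_rw [htse_fderiv_coord2]
    rw [show (fun x : EuclideanSpace ℝ (Fin d) => (x i * v j + x j * v i) * f x)
        = fun x : EuclideanSpace ℝ (Fin d) => v j * (x i * f x) + v i * (x j * f x) from
      funext fun x => by ring]
    rw [integral_add ((htse_integrable_coord_mul i f).const_mul _)
      ((htse_integrable_coord_mul j f).const_mul _), integral_const_mul, integral_const_mul]
    ring
  · simp_rw [htse_fderiv_coord2]
    refine Integrable.congr (((htse_integrable_coord_mul i f).const_mul (v j)).add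
      ((htse_integrable_coord_mul j f).const_mul (v i)))
      (Filter.Eventually.of_forall fun x => by simp only [Pi.add_apply]; ring)
  · have := htse_integrable_coord2_mul i j (pderivCLM ℝ v f)
    simpa [pderivCLM_apply] using this
  · exact htse_integrable_coord2_mul i j f

lemma htse_curve_deriv {p p' : ℝ → 𝓢(EuclideanSpace ℝ (Fin d), ℝ)} (t : ℝ)
    (hp : Tendsto (fun h : ℝ => h⁻¹ • (p (t + h) - p t)) (𝓝[≠] 0) (𝓝 (p' t)))
    (T : 𝓢(EuclideanSpace ℝ (Fin d), ℝ) →L[ℝ] ℝ) :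
    HasDerivAt (fun s => T (p s)) (T (p' t)) t := by
  rw [hasDerivAt_iff_tendsto_slope_zero]
  have h2 := (T.continuous.tendsto (p' t)).comp hp
  refine h2.congr fun h => ?_
  simp [Function.comp, _root_.map_smul, _root_.map_sub]

lemma htse_affine_temperate (c : ℝ) (A : EuclideanSpace ℝ (Fin d) →L[ℝ] ℝ) :
    Function.HasTemperateGrowth (fun y : EuclideanSpace ℝ (Fin d) => c + A y) := by
  have hdiff : Differentiable ℝ (fun y : EuclideanSpace ℝ (Fin d) => c + A y) :=
    (differentiable_const c).add A.differentiable
  refine Function.HasTemperateGrowth.of_fderiv ?_ hdiff (k := 1) (C := ‖c‖ + ‖A‖) ?_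
  · have : (fderiv ℝ fun y : EuclideanSpace ℝ (Fin d) => c + A y) = fun _ => A := by
      funext x
      have h : HasFDerivAt (fun y : EuclideanSpace ℝ (Fin d) => c + A y) (0 + A) x :=
        (hasFDerivAt_const c x).add A.hasFDerivAt
      rw [h.fderiv, zero_add]
    rw [this]
    exact Function.HasTemperateGrowth.const A
  · intro x
    have h1 : ‖c + A x‖ ≤ ‖c‖ + ‖A‖ * ‖x‖ :=
      (norm_add_le _ _).trans (by gcongr; exact A.le_opNorm x)
    have h2 : (0:ℝ) ≤ ‖A‖ := norm_nonneg _
    have h3 : (0:ℝ) ≤ ‖x‖ := norm_nonneg _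
    have h4 : (0:ℝ) ≤ ‖c‖ := norm_nonneg _
    calc ‖c + A x‖ ≤ ‖c‖ + ‖A‖ * ‖x‖ := h1
    _ ≤ (‖c‖ + ‖A‖) * (1 + ‖x‖) ^ 1 := by nlinarith

lemma htse_sum_apply {ι : Type*} [DecidableEq ι] (s : Finset ι) (f : ι → 𝓢(EuclideanSpace ℝ (Fin d), ℝ))
    (x : EuclideanSpace ℝ (Fin d)) : (∑ l ∈ s, f l) x = ∑ l ∈ s, f l x := by
  induction s using Finset.induction with
  | empty => simp
  | insert _ _ h ih => simp [Finset.sum_insert h, ih]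

end HarmonicTrapAux


/-- Evolution of the second moments for particles in a harmonic trap: if `t ↦ p(·,t)`
is a continuously differentiable curve in Schwartz space solving the Fokker–Planck
equation `∂p/∂t = ∑ᵢ [−∂ᵢ((a(t) − xᵢ + (γ/d)∑ⱼ(xⱼ − xᵢ)) p) + ν ∂ᵢ² p]` with unit
total mass, then `Σᵢⱼ(t) = ∫ xᵢ xⱼ p(x,t) dx` satisfies
`dΣᵢⱼ/dt = a(t)(X̄ⱼ + X̄ᵢ) − 2(1+γ)Σᵢⱼ + (γ/d)∑ₗ(Σₗⱼ + Σₗᵢ) + 2ν δᵢⱼ`. -/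
theorem harmonic_trap_second_moment_evolution
    (d : ℕ) (hd : 1 ≤ d) (γ : ℝ) (ν : ℝ) (hν : 0 < ν)
    (a : ℝ → ℝ) (ha : Continuous a)
    (p p' : ℝ → SchwartzMap (EuclideanSpace ℝ (Fin d)) ℝ)
    (hderiv : ∀ t : ℝ, Tendsto (fun h : ℝ => h⁻¹ • (p (t + h) - p t)) (𝓝[≠] 0) (𝓝 (p' t)))
    (hcont : Continuous p')
    (hpde : ∀ t : ℝ, ∀ x : EuclideanSpace ℝ (Fin d),
      p' t x = ∑ i : Fin d,
        (-(fderiv ℝ (fun y : EuclideanSpace ℝ (Fin d) =>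
              (a t - y i + (γ / (d : ℝ)) * ∑ j : Fin d, (y j - y i)) * p t y) x
            (EuclideanSpace.single i 1))
          + ν * fderiv ℝ (fun y => fderiv ℝ (p t) y (EuclideanSpace.single i 1)) x
              (EuclideanSpace.single i 1)))
    (hmass : ∀ t : ℝ, (∫ x : EuclideanSpace ℝ (Fin d), p t x) = 1)
    (Xbar : Fin d → ℝ → ℝ)
    (hXbar : ∀ i t, Xbar i t = ∫ x : EuclideanSpace ℝ (Fin d), x i * p t x)
    (Sig : Fin d → Fin d → ℝ → ℝ)
    (hSig : ∀ i j t, Sig i j t = ∫ x : EuclideanSpace ℝ (Fin d), x i * x j * p t x) :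
    ∀ (i j : Fin d) (t : ℝ),
      HasDerivAt (Sig i j)
        (a t * (Xbar j t + Xbar i t) - 2 * (1 + γ) * Sig i j t
          + (γ / (d : ℝ)) * ∑ l : Fin d, (Sig l j t + Sig l i t)
          + 2 * ν * (if i = j then (1 : ℝ) else 0)) t := by
  intro i j t
  have hd0 : (d : ℝ) ≠ 0 := Nat.cast_ne_zero.2 (by omega)
  -- The CLM `T f = ∫ xᵢ xⱼ f` on Schwartz space
  set T : 𝓢(EuclideanSpace ℝ (Fin d), ℝ) →L[ℝ] ℝ :=
    (integralCLM ℝ (volume : Measure (EuclideanSpace ℝ (Fin d)))).comp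
      ((htseMulCoord j).comp (htseMulCoord i)) with hTdef
  have hT : ∀ f : 𝓢(EuclideanSpace ℝ (Fin d), ℝ),
      T f = ∫ x : EuclideanSpace ℝ (Fin d), x i * x j * f x := by
    intro f
    rw [hTdef]
    simp only [ContinuousLinearMap.comp_apply, integralCLM_apply]
    congr 1
    funext x
    simp only [htseMulCoord_apply]
    ring
  -- The CLMs `J l f = ∫ x_l f`
  set J : Fin d → (𝓢(EuclideanSpace ℝ (Fin d), ℝ) →L[ℝ] ℝ) := fun l =>
    (integralCLM ℝ (volume : Measure (EuclideanSpace ℝ (Fin d)))).comp (htseMulCoord l)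
    with hJdef
  have hJ : ∀ (l : Fin d) (f : 𝓢(EuclideanSpace ℝ (Fin d), ℝ)),
      J l f = ∫ x : EuclideanSpace ℝ (Fin d), x l * f x := by
    intro l f
    rw [hJdef]
    simp only [ContinuousLinearMap.comp_apply, integralCLM_apply]
    congr 1
    funext x
    simp only [htseMulCoord_apply]
    ring
  -- The drift linear part
  set A : Fin d → (EuclideanSpace ℝ (Fin d) →L[ℝ] ℝ) := fun k =>
    (γ / (d : ℝ)) • (∑ l : Fin d, EuclideanSpace.proj l) - (1 + γ) • EuclideanSpace.proj k
    with hAdef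
  have hAapp : ∀ (k : Fin d) (y : EuclideanSpace ℝ (Fin d)),
      A k y = (γ / (d : ℝ)) * (∑ l : Fin d, y l) - (1 + γ) * y k := by
    intro k y
    rw [hAdef]
    simp only [ContinuousLinearMap.sub_apply, ContinuousLinearMap.coe_smul', Pi.smul_apply,
      ContinuousLinearMap.coe_sum', Finset.sum_apply, smul_eq_mul]
    rfl
  have hgval : ∀ (k : Fin d) (y : EuclideanSpace ℝ (Fin d)),
      a t - y k + (γ / (d : ℝ)) * ∑ l : Fin d, (y l - y k) = a t + A k y := by
    intro k y
    rw [hAapp]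
    rw [Finset.sum_sub_distrib, Finset.sum_const, Finset.card_univ, Fintype.card_fin,
      nsmul_eq_mul]
    field_simp
    ring
  have hg : ∀ k : Fin d, Function.HasTemperateGrowth
      (fun y : EuclideanSpace ℝ (Fin d) =>
        a t - y k + (γ / (d : ℝ)) * ∑ l : Fin d, (y l - y k)) := by
    intro k
    have e : (fun y : EuclideanSpace ℝ (Fin d) =>
        a t - y k + (γ / (d : ℝ)) * ∑ l : Fin d, (y l - y k))
        = fun y => a t + A k y := funext fun y => hgval k y
    rw [e]
    exact htse_affine_temperate (a t) (A k)
  set Q : Fin d → 𝓢(EuclideanSpace ℝ (Fin d), ℝ) := fun k =>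
    bilinLeftCLM (ContinuousLinearMap.mul ℝ ℝ) (hg k) (p t) with hQdef
  have hQapp : ∀ (k : Fin d) (x : EuclideanSpace ℝ (Fin d)),
      Q k x = p t x * (a t - x k + (γ / (d : ℝ)) * ∑ l : Fin d, (x l - x k)) := fun _ _ => rfl
  -- the PDE at the level of Schwartz functions
  have hp't : p' t = ∑ k : Fin d,
      (ν • (pderivCLM ℝ (EuclideanSpace.single k 1)
          (pderivCLM ℝ (EuclideanSpace.single k 1) (p t)))
        - pderivCLM ℝ (EuclideanSpace.single k 1) (Q k)) := by
    apply SchwartzMap.ext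
    intro x
    rw [hpde t x, htse_sum_apply]
    refine Finset.sum_congr rfl fun k _ => ?_
    have e1 : (fun y : EuclideanSpace ℝ (Fin d) =>
        (a t - y k + (γ / (d : ℝ)) * ∑ l : Fin d, (y l - y k)) * p t y) = ⇑(Q k) :=
      funext fun y => by rw [hQapp]; ring
    rw [e1]
    have e2 : (fun y : EuclideanSpace ℝ (Fin d) =>
        fderiv ℝ (p t) y (EuclideanSpace.single k 1))
        = ⇑(pderivCLM ℝ (EuclideanSpace.single k 1) (p t)) :=
      funext fun y => (pderivCLM_apply ℝ (EuclideanSpace.single k 1) (p t) y).symm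
    rw [e2]
    simp only [SchwartzMap.sub_apply, SchwartzMap.smul_apply, pderivCLM_apply, smul_eq_mul]
    ring
  have hTq' : T (p' t) = ∑ k : Fin d,
      (ν * T (pderivCLM ℝ (EuclideanSpace.single k 1)
          (pderivCLM ℝ (EuclideanSpace.single k 1) (p t)))
        - T (pderivCLM ℝ (EuclideanSpace.single k 1) (Q k))) := by
    rw [hp't, map_sum]
    refine Finset.sum_congr rfl fun k _ => ?_
    rw [map_sub, _root_.map_smul, smul_eq_mul]
  -- integration by parts consequences
  have hTD : ∀ (k : Fin d) (f : 𝓢(EuclideanSpace ℝ (Fin d), ℝ)),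
      T (pderivCLM ℝ (EuclideanSpace.single k 1) f)
        = -((EuclideanSpace.single k (1:ℝ)) j * J i f)
          - ((EuclideanSpace.single k (1:ℝ)) i * J j f) := by
    intro k f
    rw [hT]
    simp_rw [pderivCLM_apply]
    rw [htse_ibp2 i j (EuclideanSpace.single k 1) f, ← hJ i f, ← hJ j f]
  have hJD : ∀ (l k : Fin d) (f : 𝓢(EuclideanSpace ℝ (Fin d), ℝ)),
      J l (pderivCLM ℝ (EuclideanSpace.single k 1) f)
        = -((EuclideanSpace.single k (1:ℝ)) l * ∫ x : EuclideanSpace ℝ (Fin d), f x) := by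
    intro l k f
    rw [hJ]
    simp_rw [pderivCLM_apply]
    rw [htse_ibp1 l (EuclideanSpace.single k 1) f]
  have hTDD : ∀ k : Fin d,
      T (pderivCLM ℝ (EuclideanSpace.single k 1)
        (pderivCLM ℝ (EuclideanSpace.single k 1) (p t)))
      = (if i = k then (1:ℝ) else 0) * (if j = k then 1 else 0) * 2 := by
    intro k
    rw [hTD k, hJD i k, hJD j k, hmass t]
    simp only [EuclideanSpace.single_apply]
    ring
  -- decomposition of `Q k` as a linear combination of Schwartz functions
  have hQdec : ∀ k : Fin d, Q k = a t • p t
      + ((γ / (d : ℝ)) • ∑ l : Fin d, htseMulCoord l (p t)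
        - (1 + γ) • htseMulCoord k (p t)) := by
    intro k
    apply SchwartzMap.ext
    intro x
    rw [hQapp k x, hgval k x, hAapp k x]
    simp only [SchwartzMap.add_apply, SchwartzMap.sub_apply, SchwartzMap.smul_apply,
      htse_sum_apply, htseMulCoord_apply, smul_eq_mul]
    rw [show (∑ l : Fin d, p t x * x l) = p t x * ∑ l : Fin d, x l from
      (Finset.mul_sum _ _ _).symm]
    ring
  have hJM : ∀ l m : Fin d, J l (htseMulCoord m (p t)) = Sig m l t := by
    intro l m
    rw [hJ, hSig m l t]
    congr 1
    funext x
    simp only [htseMulCoord_apply]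
    ring
  have hJQ : ∀ l k : Fin d, J l (Q k)
      = a t * Xbar l t - (1 + γ) * Sig k l t + (γ / (d : ℝ)) * ∑ m : Fin d, Sig m l t := by
    intro l k
    rw [hQdec k, map_add, map_sub, _root_.map_smul, _root_.map_smul, _root_.map_smul, map_sum]
    simp only [smul_eq_mul]
    rw [show (J l) (p t) = Xbar l t from by rw [hJ, hXbar]]
    simp only [hJM]
    ring
  have hsum : ∀ k : Fin d,
      ν * T (pderivCLM ℝ (EuclideanSpace.single k 1)
          (pderivCLM ℝ (EuclideanSpace.single k 1) (p t)))
        - T (pderivCLM ℝ (EuclideanSpace.single k 1) (Q k))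
      = ν * ((if i = k then (1:ℝ) else 0) * (if j = k then 1 else 0) * 2)
        + ((if j = k then (1:ℝ) else 0) * J i (Q k)
          + (if i = k then (1:ℝ) else 0) * J j (Q k)) := by
    intro k
    rw [hTDD k, hTD k (Q k)]
    simp only [EuclideanSpace.single_apply]
    ring
  have s1 : (∑ k : Fin d, ν * ((if i = k then (1:ℝ) else 0) * (if j = k then 1 else 0) * 2))
      = 2 * ν * (if i = j then (1:ℝ) else 0) := by
    have e : ∀ k : Fin d, ν * ((if i = k then (1:ℝ) else 0) * (if j = k then 1 else 0) * 2)
        = if i = k then (if j = k then 2 * ν else 0) else 0 := by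
      intro k
      by_cases h1 : i = k <;> by_cases h2 : j = k <;> simp [h1, h2] <;> ring
    rw [Finset.sum_congr rfl fun k _ => e k, Finset.sum_ite_eq]
    by_cases h : i = j <;> simp [h, eq_comm]
  have s2 : (∑ k : Fin d, ((if j = k then (1:ℝ) else 0) * J i (Q k)
        + (if i = k then (1:ℝ) else 0) * J j (Q k)))
      = J i (Q j) + J j (Q i) := by
    rw [Finset.sum_add_distrib]
    congr 1
    · have e : ∀ k : Fin d, (if j = k then (1:ℝ) else 0) * J i (Q k)
          = if j = k then J i (Q k) else 0 := by
        intro k; by_cases h : j = k <;> simp [h]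
      rw [Finset.sum_congr rfl fun k _ => e k, Finset.sum_ite_eq]
      simp
    · have e : ∀ k : Fin d, (if i = k then (1:ℝ) else 0) * J j (Q k)
          = if i = k then J j (Q k) else 0 := by
        intro k; by_cases h : i = k <;> simp [h]
      rw [Finset.sum_congr rfl fun k _ => e k, Finset.sum_ite_eq]
      simp
  have hSigswap : Sig j i t = Sig i j t := by
    rw [hSig j i t, hSig i j t]
    congr 1
    funext x
    ring
  have hTfinal : T (p' t)
      = a t * (Xbar j t + Xbar i t) - 2 * (1 + γ) * Sig i j t
        + (γ / (d : ℝ)) * ∑ l : Fin d, (Sig l j t + Sig l i t)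
        + 2 * ν * (if i = j then (1 : ℝ) else 0) := by
    rw [hTq', Finset.sum_congr rfl fun k _ => hsum k, Finset.sum_add_distrib, s1, s2,
      hJQ i j, hJQ j i, hSigswap, Finset.sum_add_distrib]
    ring
  -- conclusion
  have hfun : Sig i j = fun s => T (p s) :=
    funext fun s => (hSig i j s).trans (hT (p s)).symm
  have hD : HasDerivAt (fun s => T (p s)) (T (p' t)) t := htse_curve_deriv t (hderiv t) T
  have hD2 : HasDerivAt (Sig i j) (T (p' t)) t := by
    rw [hfun]; exact hD
  rw [← hTfinal]
  exact hD2
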